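/- arXiv:2106.14872 — 2 statements merged into one kernel-verified Lean document; each statement's English description precedes it below -/
import Mathlib

section
/- Spectral properties, part 2: Let X be a complex infinite-dimensional separable Banach space and let A be a densely defined linear operator in X such that every power A^n (n ∈ ℕ) is a closed operator, and suppose there exist a set Y ⊆ C^∞(A) dense in X, a mapping B : Y → Y with ABf = f for every f ∈ Y, and a single α ∈ (0,1) such that for every f ∈ Y there exists c = c(f,α) > 0 with max(‖A^n f‖, ‖B^n f‖) ≤ c·α^n for all n ∈ ℕ. Then for every γ ∈ (α, 1) there exists M ∈ ℕ such that for all n ≥ M the annulus {λ ∈ ℂ : γ^n ≤ |λ| ≤ 1/γ^n} is contained in σ_p(A^n); in particular, every λ ∈ ℂ with α < |λ| < 1/α is an eigenvalue of A^n for all sufficiently large n. -/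
open Filter Topology TopologicalSpace

/-- The domain of the `n`-th power of the operator `A` with domain `D`:
`x ∈ D(Aⁿ)` iff `Aᵏx ∈ D(A)` for all `k < n`. -/
def opDom {X : Type*} (A : X → X) (D : Set X) (n : ℕ) : Set X :=
  {x | ∀ k < n, A^[k] x ∈ D}

/-- `C^∞(A) = ⋂ₙ D(Aⁿ)`. -/
def opCinf {X : Type*} (A : X → X) (D : Set X) : Set X :=
  {x | ∀ k : ℕ, A^[k] x ∈ D}

/-- `A` is linear on the subspace `D`. -/
def IsLinearOn (𝕜 : Type*) {X : Type*} [RCLike 𝕜] [NormedAddCommGroup X]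
    [NormedSpace 𝕜 X] (A : X → X) (D : Set X) : Prop :=
  (∀ x ∈ D, ∀ y ∈ D, A (x + y) = A x + A y) ∧
  (∀ (c : 𝕜), ∀ x ∈ D, A (c • x) = c • A x)

/-- The `n`-th power of `A` (with domain `D`) is a closed operator:
its graph is closed in `X × X`. -/
def ClosedPower {X : Type*} [NormedAddCommGroup X] (A : X → X) (D : Set X)
    (n : ℕ) : Prop :=
  IsClosed {p : X × X | p.1 ∈ opDom A D n ∧ p.2 = A^[n] p.1}

/-- A hypercyclic vector for `A`: a nonzero `f ∈ C^∞(A)` with dense orbit. -/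
def HypercyclicVec {X : Type*} [NormedAddCommGroup X] (A : X → X) (D : Set X)
    (f : X) : Prop :=
  f ∈ opCinf A D ∧ f ≠ 0 ∧ Dense (Set.range fun n : ℕ => A^[n] f)

/-- `A` (with domain `D`) is hypercyclic. -/
def HypercyclicOp {X : Type*} [NormedAddCommGroup X] (A : X → X) (D : Set X) :
    Prop :=
  ∃ f, HypercyclicVec A D f

/-- `f` is a periodic point of `A`: `f ∈ D(A^N)` and `A^N f = f` for some `N ≥ 1`. -/
def PeriodicPt {X : Type*} (A : X → X) (D : Set X) (f : X) : Prop :=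
  ∃ N : ℕ, 0 < N ∧ f ∈ opDom A D N ∧ A^[N] f = f

/-- `A` (with domain `D`) is chaotic: hypercyclic with a dense set of periodic
points. -/
def ChaoticOp {X : Type*} [NormedAddCommGroup X] (A : X → X) (D : Set X) : Prop :=
  HypercyclicOp A D ∧ Dense {f | PeriodicPt A D f}

/-- The local quantity `r(T,f) = limsup ‖Tⁿ f‖^{1/n}`, computed in `ℝ≥0∞`. -/
noncomputable def orbitRad {X : Type*} [NormedAddCommGroup X] (T : X → X)
    (f : X) : ENNReal :=
  Filter.limsup (fun n : ℕ => (‖T^[n] f‖₊ : ENNReal) ^ (1 / (n : ℝ))) Filter.atTop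

/-- The point spectrum of the `n`-th power of `A` (with domain `D`):
`λ ∈ σ_p(Aⁿ)` iff `Aⁿ g = λ g` for some nonzero `g ∈ D(Aⁿ)`. -/
def pointSpecPow {X : Type*} [NormedAddCommGroup X] [NormedSpace ℂ X]
    (A : X → X) (D : Set X) (n : ℕ) : Set ℂ :=
  {l | ∃ g, g ≠ 0 ∧ g ∈ opDom A D n ∧ A^[n] g = l • g}


/-!
Fix `0 ≠ f ∈ Y` and write `uⱼ = Aʲ f` for `j ≥ 0`, `uⱼ = B⁻ʲ f` for `j < 0`, so that `A uⱼ = uⱼ₊₁`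
for all `j ∈ ℤ`. For `l ≠ 0` the series `g = ∑_{k ∈ ℤ} l⁻ᵏ u_{nk}` is shifted by `Aⁿ` into `l g`,
so closedness of `Aⁿ` makes `g` an eigenvector as soon as the series converges. On the annulus
`γⁿ ≤ |l| ≤ γ⁻ⁿ` the terms with `k ≠ 0` are bounded by `c (α/γ)^{n|k|}`, hence the series converges
and `‖g - f‖ ≤ 2c ρ / (1 - ρ)` with `ρ = (α/γ)ⁿ → 0`, which gives `g ≠ 0` for large `n`.
-/
theorem iterate_mem_opCinf {X : Type*} {A : X → X} {D : Set X} {x : X} (hx : x ∈ opCinf A D)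
    (j : ℕ) : A^[j] x ∈ opCinf A D := fun k => by
  rw [← Function.iterate_add_apply]
  exact hx (k + j)

theorem opCinf_subset_opDom {X : Type*} (A : X → X) (D : Set X) (n : ℕ) :
    opCinf A D ⊆ opDom A D n := fun _ hx k _ => hx k

namespace IsLinearOn

variable {𝕜 X : Type*} [RCLike 𝕜] [NormedAddCommGroup X] [NormedSpace 𝕜 X]
  {A : X → X} {D : Submodule 𝕜 X}

theorem map_zero (hA : IsLinearOn 𝕜 A D) : A 0 = 0 := by
  simpa using hA.2 0 0 D.zero_mem

theorem iterate_add (hA : IsLinearOn 𝕜 A D) {x y : X} (hx : x ∈ opCinf A D)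
    (hy : y ∈ opCinf A D) (n : ℕ) : A^[n] (x + y) = A^[n] x + A^[n] y := by
  induction n with
  | zero => rfl
  | succ n ih =>
    simp only [Function.iterate_succ_apply', ih]
    exact hA.1 _ (hx n) _ (hy n)

theorem iterate_smul (hA : IsLinearOn 𝕜 A D) (c : 𝕜) {x : X} (hx : x ∈ opCinf A D) (n : ℕ) :
    A^[n] (c • x) = c • A^[n] x := by
  induction n with
  | zero => rfl
  | succ n ih =>
    simp only [Function.iterate_succ_apply', ih]
    exact hA.2 c _ (hx n)

def cinf (hA : IsLinearOn 𝕜 A D) : Submodule 𝕜 X where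
  carrier := opCinf A D
  zero_mem' k := by
    rw [Function.iterate_fixed hA.map_zero]
    exact D.zero_mem
  add_mem' hx hy k := by
    rw [hA.iterate_add hx hy]
    exact D.add_mem (hx k) (hy k)
  smul_mem' c _ hx k := by
    rw [hA.iterate_smul c hx]
    exact D.smul_mem c (hx k)

def iterateₗ (hA : IsLinearOn 𝕜 A D) (n : ℕ) : hA.cinf →ₗ[𝕜] X where
  toFun x := A^[n] x
  map_add' x y := hA.iterate_add x.2 y.2 n
  map_smul' c x := hA.iterate_smul c x.2 n

theorem iterate_sum (hA : IsLinearOn 𝕜 A D) {ι : Type*} (s : Finset ι) {v : ι → X}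
    (hv : ∀ i, v i ∈ opCinf A D) (n : ℕ) :
    A^[n] (∑ i ∈ s, v i) = ∑ i ∈ s, A^[n] (v i) := by
  have h := map_sum (hA.iterateₗ n) (fun i => ⟨v i, hv i⟩) s
  change A^[n] ((∑ i ∈ s, ⟨v i, hv i⟩ : hA.cinf) : X) = _ at h
  rwa [Submodule.coe_sum] at h

end IsLinearOn

/-- The two-sided orbit `…, B²f, Bf, f, Af, A²f, …` of `f`, with `f` at index `0`. -/
def biOrbit {X : Type*} (A B : X → X) (f : X) : ℤ → X
  | .ofNat k => A^[k] f
  | .negSucc k => B^[k + 1] f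

section biOrbit

variable {X : Type*} {A B : X → X} {Y : Set X} {f : X}

theorem biOrbit_zero : biOrbit A B f 0 = f := rfl

theorem apply_biOrbit (hB : Set.MapsTo B Y Y) (hAB : ∀ y ∈ Y, A (B y) = y) (hf : f ∈ Y)
    (j : ℤ) : A (biOrbit A B f j) = biOrbit A B f (j + 1) := by
  rcases j with k | (_ | k)
  · exact (Function.iterate_succ_apply' A k f).symm
  · exact hAB f hf
  · change A (B^[k + 2] f) = B^[k + 1] f
    rw [Function.iterate_succ_apply', hAB _ (hB.iterate (k + 1) hf)]

theorem iterate_biOrbit (hB : Set.MapsTo B Y Y) (hAB : ∀ y ∈ Y, A (B y) = y) (hf : f ∈ Y)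
    (n : ℕ) (j : ℤ) : A^[n] (biOrbit A B f j) = biOrbit A B f (j + n) := by
  induction n with
  | zero => simp
  | succ n ih =>
    rw [Function.iterate_succ_apply', ih, apply_biOrbit hB hAB hf, Nat.cast_succ, add_assoc]

theorem biOrbit_mem_opCinf {D : Set X} (hYsub : Y ⊆ opCinf A D) (hB : Set.MapsTo B Y Y)
    (hf : f ∈ Y) (j : ℤ) : biOrbit A B f j ∈ opCinf A D := by
  rcases j with k | k
  · exact iterate_mem_opCinf (hYsub hf) k
  · exact hYsub (hB.iterate (k + 1) hf)

theorem norm_biOrbit_le [Norm X] {c α : ℝ}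
    (hbound : ∀ n : ℕ, 0 < n → max ‖A^[n] f‖ ‖B^[n] f‖ ≤ c * α ^ n) {j : ℤ} (hj : j ≠ 0) :
    ‖biOrbit A B f j‖ ≤ c * α ^ j.natAbs := by
  rcases j with k | k
  · exact (le_max_left _ _).trans (hbound k (Nat.pos_of_ne_zero (by rintro rfl; exact hj rfl)))
  · exact (le_max_right _ _).trans (hbound (k + 1) k.succ_pos)

end biOrbit

theorem exists_hasSum_of_norm_le_geometric {E : Type*} [NormedAddCommGroup E] [CompleteSpace E]
    {v : ℤ → E} {c ρ : ℝ} (hρ0 : 0 ≤ ρ) (hρ1 : ρ < 1)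
    (hv : ∀ k ≠ 0, ‖v k‖ ≤ c * ρ ^ k.natAbs) :
    ∃ g, HasSum v g ∧ ‖g - v 0‖ ≤ 2 * (c * ρ / (1 - ρ)) := by
  have hgeom : HasSum (fun m : ℕ => c * ρ ^ (m + 1)) (c * ρ / (1 - ρ)) := by
    simpa [pow_succ', mul_assoc, div_eq_mul_inv] using
      (hasSum_geometric_of_lt_one hρ0 hρ1).mul_left (c * ρ)
  have hpos : ∀ m : ℕ, ‖v (m + 1)‖ ≤ c * ρ ^ (m + 1) := fun m => hv _ (by omega)
  have hneg : ∀ m : ℕ, ‖v (-(m + 1))‖ ≤ c * ρ ^ (m + 1) := fun m => hv _ (by omega)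
  obtain ⟨a, ha⟩ := hgeom.summable.of_norm_bounded hpos
  obtain ⟨b, hb⟩ := hgeom.summable.of_norm_bounded hneg
  refine ⟨a + v 0 + b, ha.of_add_one_of_neg_add_one hb, ?_⟩
  calc ‖a + v 0 + b - v 0‖ = ‖a + b‖ := by rw [add_right_comm, add_sub_cancel_right]
    _ ≤ ‖a‖ + ‖b‖ := norm_add_le a b
    _ ≤ 2 * (c * ρ / (1 - ρ)) := by
      linarith [ha.norm_le_of_bounded hgeom hpos, hb.norm_le_of_bounded hgeom hneg]

theorem mem_and_apply_eq_smul_of_hasSum {R X : Type*} [AddCommMonoid X] [TopologicalSpace X]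
    [SMul R X] [ContinuousConstSMul R X] {T : X → X} {S : Set X}
    (hT : IsClosed {p : X × X | p.1 ∈ S ∧ p.2 = T p.1}) {v : ℤ → X} {g : X} (hv : HasSum v g)
    (l : R) (hS : ∀ F : Finset ℤ, ∑ k ∈ F, v k ∈ S)
    (hTv : ∀ F : Finset ℤ, T (∑ k ∈ F, v k) = l • ∑ k ∈ F, v (k + 1)) :
    g ∈ S ∧ T g = l • g := by
  have hshift : HasSum (fun k => v (k + 1)) g := (Equiv.addRight (1 : ℤ)).hasSum_iff.2 hv
  have hTconv : Tendsto (fun F : Finset ℤ => T (∑ k ∈ F, v k)) atTop (𝓝 (l • g)) := by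
    simpa only [hTv] using (show Tendsto (fun F : Finset ℤ => ∑ k ∈ F, v (k + 1)) atTop (𝓝 g)
      from hshift).const_smul l
  have hgraph :=
    hT.mem_of_tendsto (hv.prodMk_nhds hTconv) (Eventually.of_forall fun F => ⟨hS F, rfl⟩)
  exact ⟨hgraph.1, hgraph.2.symm⟩

theorem norm_inv_zpow_le {𝕜 : Type*} [NormedDivisionRing 𝕜] {l : 𝕜} {a : ℝ} (ha : 0 < a)
    (h₁ : a ≤ ‖l‖) (h₂ : ‖l‖ ≤ 1 / a) (k : ℤ) : ‖(l ^ k)⁻¹‖ ≤ a⁻¹ ^ k.natAbs := by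
  rcases Int.eq_nat_or_neg k with ⟨m, rfl | rfl⟩
  · simpa using pow_le_pow_left₀ (inv_nonneg.2 (norm_nonneg l)) (inv_anti₀ ha h₁) m
  · simpa [zpow_neg] using pow_le_pow_left₀ (norm_nonneg l) (h₂.trans_eq (one_div a)) m

section Spectrum

variable {X : Type*} [NormedAddCommGroup X] [NormedSpace ℂ X] [CompleteSpace X]
  {D : Submodule ℂ X} {A B : X → X} {Y : Set X} {f : X}

theorem mem_pointSpecPow_of_biOrbit (hA : IsLinearOn ℂ A D) {n : ℕ} (hcl : ClosedPower A D n)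
    (hYsub : Y ⊆ opCinf A D) (hB : Set.MapsTo B Y Y) (hAB : ∀ y ∈ Y, A (B y) = y) (hf : f ∈ Y)
    {l : ℂ} (hl : l ≠ 0) {c ρ : ℝ} (hρ0 : 0 ≤ ρ) (hρ1 : ρ < 1)
    (hv : ∀ k ≠ 0, ‖(l ^ k)⁻¹ • biOrbit A B f (n * k)‖ ≤ c * ρ ^ k.natAbs)
    (hsmall : 2 * (c * ρ / (1 - ρ)) < ‖f‖) : l ∈ pointSpecPow A D n := by
  set v : ℤ → X := fun k => (l ^ k)⁻¹ • biOrbit A B f (n * k)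
  have horbit := biOrbit_mem_opCinf hYsub hB hf
  have hvC : ∀ k, v k ∈ opCinf A D := fun k => hA.cinf.smul_mem _ (horbit _)
  have hshift : ∀ k, A^[n] (v k) = l • v (k + 1) := fun k => by
    simp only [v, hA.iterate_smul _ (horbit _), iterate_biOrbit hB hAB hf, smul_smul, mul_add,
      mul_one, zpow_add_one₀ hl]
    congr 1
    field_simp
  obtain ⟨g, hg, hgf⟩ := exists_hasSum_of_norm_le_geometric hρ0 hρ1 hv
  obtain ⟨hgD, hgA⟩ := mem_and_apply_eq_smul_of_hasSum hcl hg l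
    (fun F => opCinf_subset_opDom A D n (hA.cinf.sum_mem fun k _ => hvC k))
    (fun F => by
      rw [hA.iterate_sum F hvC, Finset.smul_sum]
      exact Finset.sum_congr rfl fun k _ => hshift k)
  refine ⟨g, fun hg0 => hsmall.not_ge ?_, hgD, hgA⟩
  simpa [hg0, biOrbit_zero] using hgf

theorem eventually_annulus_subset_pointSpecPow (hA : IsLinearOn ℂ A D)
    (hcl : ∀ n : ℕ, 0 < n → ClosedPower A D n) (hYsub : Y ⊆ opCinf A D)
    (hB : Set.MapsTo B Y Y) (hAB : ∀ y ∈ Y, A (B y) = y) (hf : f ∈ Y) (hf0 : f ≠ 0)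
    {c α γ : ℝ} (hα : 0 ≤ α) (hαγ : α < γ)
    (hbound : ∀ n : ℕ, 0 < n → max ‖A^[n] f‖ ‖B^[n] f‖ ≤ c * α ^ n) :
    ∀ᶠ n in atTop, ∀ l : ℂ, γ ^ n ≤ ‖l‖ → ‖l‖ ≤ 1 / γ ^ n → l ∈ pointSpecPow A D n := by
  have hγ : 0 < γ := hα.trans_lt hαγ
  set r := α / γ
  have hr0 : 0 ≤ r := div_nonneg hα hγ.le
  have hr1 : r < 1 := (div_lt_one hγ).2 hαγ
  have hrn : Tendsto (fun n : ℕ => r ^ n) atTop (𝓝 0) :=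
    tendsto_pow_atTop_nhds_zero_of_lt_one hr0 hr1
  have hsmall : ∀ᶠ n : ℕ in atTop, 2 * (c * r ^ n / (1 - r ^ n)) < ‖f‖ := by
    have : Tendsto (fun n : ℕ => 2 * (c * r ^ n / (1 - r ^ n))) atTop (𝓝 0) := by
      simpa using ((hrn.const_mul c).div (tendsto_const_nhds.sub hrn) (by norm_num)).const_mul 2
    exact this.eventually_lt_const (norm_pos_iff.2 hf0)
  filter_upwards [hsmall, eventually_gt_atTop 0] with n hn hn0 l hl₁ hl₂
  have hγn : 0 < γ ^ n := pow_pos hγ n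
  have hl : l ≠ 0 := norm_pos_iff.1 (hγn.trans_le hl₁)
  refine mem_pointSpecPow_of_biOrbit hA (hcl n hn0) hYsub hB hAB hf hl (pow_nonneg hr0 n)
    (pow_lt_one₀ hr0 hr1 hn0.ne') (fun k hk => ?_) hn
  have hnk : (n : ℤ) * k ≠ 0 := mul_ne_zero (by exact_mod_cast hn0.ne') hk
  calc ‖(l ^ k)⁻¹ • biOrbit A B f (n * k)‖
      ≤ (γ ^ n)⁻¹ ^ k.natAbs * (c * (α ^ n) ^ k.natAbs) := by
        rw [norm_smul, ← pow_mul]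
        refine mul_le_mul (norm_inv_zpow_le hγn hl₁ hl₂ k) ?_ (norm_nonneg _) (by positivity)
        simpa [Int.natAbs_mul] using norm_biOrbit_le hbound hnk
    _ = c * (r ^ n) ^ k.natAbs := by
        rw [div_pow, div_pow, inv_pow]
        field_simp

end Spectrum

theorem exists_pos_forall_ge_of_eventually {p : ℕ → Prop} (h : ∀ᶠ n in atTop, p n) :
    ∃ M : ℕ, 0 < M ∧ ∀ n ≥ M, p n := by
  obtain ⟨M, hM⟩ := eventually_atTop.1 (h.and (eventually_gt_atTop 0))
  exact ⟨M, (hM M le_rfl).2, fun n hn => (hM n hn).1⟩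

theorem eventually_pow_le_and_le_one_div_pow {x γ : ℝ} (hx : 0 < x) (hγ0 : 0 < γ)
    (hγ1 : γ < 1) :
    ∀ᶠ n : ℕ in atTop, γ ^ n ≤ x ∧ x ≤ 1 / γ ^ n := by
  have hpow := tendsto_pow_atTop_nhds_zero_of_lt_one hγ0.le hγ1
  filter_upwards [hpow.eventually (ge_mem_nhds hx),
    hpow.eventually (ge_mem_nhds (one_div_pos.2 hx))] with n hn hn'
  exact ⟨hn, (le_one_div hx (pow_pos hγ0 n)).2 hn'⟩

theorem spectral_properties_part2_general
    {X : Type*} [NormedAddCommGroup X] [NormedSpace ℂ X]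
    [CompleteSpace X]
    (hinfdim : ¬ FiniteDimensional ℂ X)
    (D : Submodule ℂ X) (A : X → X)
    (hlin : IsLinearOn ℂ A (D : Set X))
    (hcl : ∀ n : ℕ, 0 < n → ClosedPower A (D : Set X) n)
    (Y : Set X) (hYsub : Y ⊆ opCinf A (D : Set X)) (hYdense : Dense Y)
    (B : X → X) (hBmaps : Set.MapsTo B Y Y)
    (h1 : ∀ f ∈ Y, A (B f) = f)
    (α : ℝ) (hα : α ∈ Set.Ioo (0 : ℝ) 1)
    (h2 : ∀ f ∈ Y, ∃ c > 0, ∀ n : ℕ, 0 < n →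
      max ‖A^[n] f‖ ‖B^[n] f‖ ≤ c * α ^ n) :
    (∀ γ : ℝ, α < γ → γ < 1 →
      ∃ M : ℕ, 0 < M ∧ ∀ n ≥ M, ∀ l : ℂ, γ ^ n ≤ ‖l‖ → ‖l‖ ≤ 1 / γ ^ n →
        l ∈ pointSpecPow A (D : Set X) n) ∧
    (∀ l : ℂ, α < ‖l‖ → ‖l‖ < 1 / α →
      ∃ M : ℕ, 0 < M ∧ ∀ n ≥ M, l ∈ pointSpecPow A (D : Set X) n) := by
  have : Nontrivial X := by
    by_contra h
    exact hinfdim (by rw [not_nontrivial_iff_subsingleton] at h; infer_instance)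
  obtain ⟨f, hf0, hfY⟩ := hYdense.inter_open_nonempty {0}ᶜ isOpen_compl_singleton (exists_ne 0)
  obtain ⟨c, -, hc⟩ := h2 f hfY
  have annulus (γ : ℝ) (hαγ : α < γ) := eventually_annulus_subset_pointSpecPow hlin hcl hYsub
    hBmaps h1 hfY hf0 hα.1.le hαγ hc
  refine ⟨fun γ hαγ _ => exists_pos_forall_ge_of_eventually (annulus γ hαγ), fun l hl _ => ?_⟩
  obtain ⟨γ, hαγ, hγ1⟩ := exists_between hα.2
  refine exists_pos_forall_ge_of_eventually ((annulus γ hαγ).and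
    (eventually_pow_le_and_le_one_div_pow (hα.1.trans hl) (hα.1.trans hαγ) hγ1) |>.mono ?_)
  exact fun n ⟨hn, hl₁, hl₂⟩ => hn l hl₁ hl₂

/-- **Spectral properties, part 2.** -/
theorem spectral_properties_part2
    {X : Type*} [NormedAddCommGroup X] [NormedSpace ℂ X]
    [CompleteSpace X] [SeparableSpace X]
    (hinfdim : ¬ FiniteDimensional ℂ X)
    (D : Submodule ℂ X) (A : X → X)
    (hlin : IsLinearOn ℂ A (D : Set X))
    (hdd : Dense (D : Set X))
    (hcl : ∀ n : ℕ, 0 < n → ClosedPower A (D : Set X) n)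
    (Y : Set X) (hYsub : Y ⊆ opCinf A (D : Set X)) (hYdense : Dense Y)
    (B : X → X) (hBmaps : Set.MapsTo B Y Y)
    (h1 : ∀ f ∈ Y, A (B f) = f)
    (α : ℝ) (hα : α ∈ Set.Ioo (0 : ℝ) 1)
    (h2 : ∀ f ∈ Y, ∃ c > 0, ∀ n : ℕ, 0 < n →
      max ‖A^[n] f‖ ‖B^[n] f‖ ≤ c * α ^ n) :
    (∀ γ : ℝ, α < γ → γ < 1 →
      ∃ M : ℕ, 0 < M ∧ ∀ n ≥ M, ∀ l : ℂ, γ ^ n ≤ ‖l‖ → ‖l‖ ≤ 1 / γ ^ n →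
        l ∈ pointSpecPow A (D : Set X) n) ∧
    (∀ l : ℂ, α < ‖l‖ → ‖l‖ < 1 / α →
      ∃ M : ℕ, 0 < M ∧ ∀ n ≥ M, l ∈ pointSpecPow A (D : Set X) n) :=
  spectral_properties_part2_general hinfdim D A hlin hcl Y hYsub hYdense B hBmaps h1 α hα h2
end

section
/- Spectral properties, part 7 (nontrivial kernel and full point spectrum): Let X be a complex infinite-dimensional separable Banach space and let A be a densely defined linear operator in X such that every power A^n (n ∈ ℕ) is a closed operator. Suppose B : X → X is a bounded linear operator such that: for every f ∈ X, Bf ∈ D(A) and A(Bf) = f; for every n ∈ ℕ, ker A^n ∩ R(B^n) = {0}; there exists a dense set Y ⊆ C^∞(A) with B(Y) ⊆ Y and Y ⊆ ⋃_{n≥1} ker A^n; and for every f ∈ X and every α ∈ (0,1) there exists c = c(f,α) > 0 with ‖B^n f‖ ≤ c·α^n for all n ∈ ℕ (i.e., limsup_{n→∞} ‖B^n f‖^{1/n} = 0 for all f ∈ X). Then ker A ≠ {0}, and for every n ∈ ℕ one has σ_p(A^n) = ℂ, i.e., every λ ∈ ℂ is an eigenvalue of A^n. -/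
open Filter Topology TopologicalSpace

/-!
A nonzero vector of the dense set `Y` is killed by some power of `A`, so the last nonzero vector
of its `A`-orbit lies in `ker A`. Given such an `x` and `μ ∈ ℂ`, the local quasinilpotency of `B`
makes `g = ∑ μⁿ Bⁿ x` converge; it solves `g = x + μ B g`, and since `A B = I` this gives
`A g = μ g` with `g ≠ 0`. Then `Aⁿ g = μⁿ g`, and every `λ` is some `μⁿ`.
-/

section Series

variable {𝕜 E : Type*} [NormedField 𝕜] [NormedAddCommGroup E] [NormedSpace 𝕜 E]

theorem tsum_pow_smul_iterate_eq_add (B : E →L[𝕜] E) (μ : 𝕜) (x : E)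
    (h : Summable fun n : ℕ => μ ^ n • (⇑B)^[n] x) :
    ∑' n : ℕ, μ ^ n • (⇑B)^[n] x = x + μ • B (∑' n : ℕ, μ ^ n • (⇑B)^[n] x) := by
  conv_lhs => rw [h.tsum_eq_zero_add]
  rw [B.map_tsum h, ← (B.summable h).tsum_const_smul μ]
  simp only [pow_zero, one_smul, Function.iterate_zero_apply, Function.iterate_succ_apply',
    map_smul, smul_smul, pow_succ']

variable [CompleteSpace E]

theorem summable_pow_smul_iterate_of_norm_le {T : E → E} {x : E} {μ : 𝕜} {c α : ℝ}
    (hα : 0 ≤ α) (hμα : ‖μ‖ * α < 1) (hT : ∀ n : ℕ, 0 < n → ‖T^[n] x‖ ≤ c * α ^ n) :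
    Summable fun n : ℕ => μ ^ n • T^[n] x := by
  refine .of_norm_bounded_eventually_nat
    ((summable_geometric_of_lt_one (by positivity) hμα).mul_left c) ?_
  filter_upwards [eventually_gt_atTop 0] with n hn
  calc ‖μ ^ n • T^[n] x‖ = ‖μ‖ ^ n * ‖T^[n] x‖ := by rw [norm_smul, norm_pow]
    _ ≤ ‖μ‖ ^ n * (c * α ^ n) := by gcongr; exact hT n hn
    _ = c * (‖μ‖ * α) ^ n := by ring

theorem summable_pow_smul_iterate_of_forall_norm_le {T : E → E} {x : E}
    (hT : ∀ α ∈ Set.Ioo (0 : ℝ) 1, ∃ c > 0, ∀ n : ℕ, 0 < n → ‖T^[n] x‖ ≤ c * α ^ n) (μ : 𝕜) :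
    Summable fun n : ℕ => μ ^ n • T^[n] x := by
  have hα : (‖μ‖ + 2)⁻¹ ∈ Set.Ioo (0 : ℝ) 1 :=
    ⟨by positivity, inv_lt_one_of_one_lt₀ (by linarith [norm_nonneg μ])⟩
  obtain ⟨c, -, hc⟩ := hT _ hα
  refine summable_pow_smul_iterate_of_norm_le hα.1.le ?_ hc
  rw [← div_eq_mul_inv, div_lt_one (by positivity)]
  linarith

end Series

theorem exists_mem_ne_zero_apply_eq_zero_of_iterate_eq_zero {X : Type*} [Zero X]
    {A : X → X} {D : Set X} {m : ℕ} {y : X} (hy : y ∈ opDom A D m) (hy0 : y ≠ 0)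
    (hm : A^[m] y = 0) : ∃ x ∈ D, x ≠ 0 ∧ A x = 0 := by
  induction m generalizing y with
  | zero => exact absurd hm hy0
  | succ m ih =>
    by_cases hAy : A y = 0
    · exact ⟨y, hy 0 m.succ_pos, hy0, hAy⟩
    · refine ih (fun k hk => ?_) hAy hm
      simpa only [← Function.iterate_succ_apply] using hy (k + 1) (by omega)

theorem IsLinearOn.iterate_apply_eq_pow_smul {𝕜 X : Type*} [RCLike 𝕜] [NormedAddCommGroup X]
    [NormedSpace 𝕜 X] {A : X → X} {D : Set X} (hlin : IsLinearOn 𝕜 A D) {g : X} {μ : 𝕜}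
    (hg : g ∈ D) (hAg : A g = μ • g) (n : ℕ) :
    A^[n] g = μ ^ n • g := by
  induction n with
  | zero => simp
  | succ n ih =>
    rw [Function.iterate_succ_apply', ih, hlin.2 _ _ hg, hAg, smul_smul, pow_succ]

theorem IsLinearOn.apply_eq_smul_of_eq_add_smul {𝕜 X : Type*} [RCLike 𝕜] [NormedAddCommGroup X]
    [NormedSpace 𝕜 X] {A : X → X} {D : Submodule 𝕜 X} (hlin : IsLinearOn 𝕜 A (D : Set X))
    {B : X → X} (hB : ∀ f : X, B f ∈ (D : Set X) ∧ A (B f) = f) {x g : X} {μ : 𝕜}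
    (hx : x ∈ (D : Set X)) (hAx : A x = 0) (hg : g = x + μ • B g) :
    g ∈ (D : Set X) ∧ A g = μ • g := by
  have hμBg : μ • B g ∈ (D : Set X) := D.smul_mem μ (hB g).1
  constructor
  · rw [hg]
    exact D.add_mem hx hμBg
  · conv_lhs => rw [hg]
    rw [hlin.1 x hx _ hμBg, hlin.2 μ _ (hB g).1, hAx, (hB g).2, zero_add]

theorem IsLinearOn.pow_mem_pointSpecPow {X : Type*} [NormedAddCommGroup X] [NormedSpace ℂ X]
    {A : X → X} {D : Submodule ℂ X} (hlin : IsLinearOn ℂ A (D : Set X)) {g : X} {μ : ℂ}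
    (hg0 : g ≠ 0) (hg : g ∈ (D : Set X)) (hAg : A g = μ • g) (n : ℕ) :
    μ ^ n ∈ pointSpecPow A (D : Set X) n := by
  refine ⟨g, hg0, fun k _ => ?_, hlin.iterate_apply_eq_pow_smul hg hAg n⟩
  rw [hlin.iterate_apply_eq_pow_smul hg hAg k]
  exact D.smul_mem _ hg

theorem spectral_properties_part7_full_point_spectrum_general
    {X : Type*} [NormedAddCommGroup X] [NormedSpace ℂ X]
    [CompleteSpace X]
    (hinfdim : ¬ FiniteDimensional ℂ X)
    (D : Submodule ℂ X) (A : X → X)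
    (hlin : IsLinearOn ℂ A (D : Set X))
    (B : X →L[ℂ] X)
    (hB1 : ∀ f : X, B f ∈ (D : Set X) ∧ A (B f) = f)
    (Y : Set X) (hYsub : Y ⊆ opCinf A (D : Set X)) (hYdense : Dense Y)
    (hYker : ∀ f ∈ Y, ∃ N : ℕ, ∀ n ≥ N, A^[n] f = 0)
    (hquasi : ∀ f : X, ∀ α ∈ Set.Ioo (0 : ℝ) 1, ∃ c > 0, ∀ n : ℕ, 0 < n →
      ‖(⇑B)^[n] f‖ ≤ c * α ^ n) :
    (∃ x ∈ (D : Set X), x ≠ 0 ∧ A x = 0) ∧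
    (∀ n : ℕ, 0 < n → ∀ l : ℂ, l ∈ pointSpecPow A (D : Set X) n) := by
  have : Nontrivial X := not_subsingleton_iff_nontrivial.mp fun _ => hinfdim inferInstance
  obtain ⟨y, hyY, hy0⟩ := (hYdense.sdiff_singleton 0).nonempty
  obtain ⟨N, hN⟩ := hYker y hyY
  obtain ⟨x, hxD, hx0, hAx⟩ :=
    exists_mem_ne_zero_apply_eq_zero_of_iterate_eq_zero (fun k _ => hYsub hyY k) hy0 (hN N le_rfl)
  refine ⟨⟨x, hxD, hx0, hAx⟩, fun n hn l => ?_⟩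
  obtain ⟨μ, rfl⟩ := IsAlgClosed.exists_pow_nat_eq l hn
  set g := ∑' k : ℕ, μ ^ k • (⇑B)^[k] x
  have hg : g = x + μ • B g :=
    tsum_pow_smul_iterate_eq_add B μ x (summable_pow_smul_iterate_of_forall_norm_le (hquasi x) μ)
  have hg0 : g ≠ 0 := by
    intro h
    rw [h, map_zero, smul_zero, add_zero] at hg
    exact hx0 hg.symm
  obtain ⟨hgD, hAg⟩ := hlin.apply_eq_smul_of_eq_add_smul hB1 hxD hAx hg
  exact hlin.pow_mem_pointSpecPow hg0 hgD hAg n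

/-- **Spectral properties, part 7: nontrivial kernel and full point spectra.** -/
theorem spectral_properties_part7_full_point_spectrum
    {X : Type*} [NormedAddCommGroup X] [NormedSpace ℂ X]
    [CompleteSpace X] [SeparableSpace X]
    (hinfdim : ¬ FiniteDimensional ℂ X)
    (D : Submodule ℂ X) (A : X → X)
    (hlin : IsLinearOn ℂ A (D : Set X))
    (hdd : Dense (D : Set X))
    (hcl : ∀ n : ℕ, 0 < n → ClosedPower A (D : Set X) n)
    (B : X →L[ℂ] X)
    (hB1 : ∀ f : X, B f ∈ (D : Set X) ∧ A (B f) = f)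
    (hkerR : ∀ n : ℕ, 0 < n → ∀ x, x ∈ opDom A (D : Set X) n → A^[n] x = 0 →
      (∃ y, (⇑B)^[n] y = x) → x = 0)
    (Y : Set X) (hYsub : Y ⊆ opCinf A (D : Set X)) (hYdense : Dense Y)
    (hBmaps : Set.MapsTo (⇑B) Y Y)
    (hYker : ∀ f ∈ Y, ∃ N : ℕ, ∀ n ≥ N, A^[n] f = 0)
    (hquasi : ∀ f : X, ∀ α ∈ Set.Ioo (0 : ℝ) 1, ∃ c > 0, ∀ n : ℕ, 0 < n →
      ‖(⇑B)^[n] f‖ ≤ c * α ^ n) :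
    (∃ x ∈ (D : Set X), x ≠ 0 ∧ A x = 0) ∧
    (∀ n : ℕ, 0 < n → ∀ l : ℂ, l ∈ pointSpecPow A (D : Set X) n) :=
  spectral_properties_part7_full_point_spectrum_general hinfdim D A hlin B hB1 Y hYsub hYdense hYker
    hquasi
end
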